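/- Greedy decomposition lemma: let F be a finite-dimensional p-normed space, 0 < p ≤ 1, δ ∈ (0,1), and let f_1, …, f_n be a δ-net in the unit sphere S of F. Then every f ∈ S can be written as f = ∑_{i=1}^n c_i f_i with scalars c_i satisfying (∑ |c_i|^p)^(1/p) ≤ (1 − δ^p)^(−1/p). -/

import Mathlib

/-!
Run the greedy algorithm: from the residual `r`, subtract `N r • f i` where `f i` is within `δ`
of `r / N r`. The residual shrinks by the factor `δ` at every step, so after grouping the
coefficients `N r_j` by the chosen net element, `(∑ a_j)^p ≤ ∑ a_j^p` bounds `∑ |c_i|^p` by the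
geometric series `∑ δ^(jp) = (1 - δ^p)⁻¹`. The grouped coefficients converge, and by
`p`-subadditivity `c ↦ ∑ c_i f_i` is continuous for `N`, so the limit represents `g` exactly.
-/

open Filter Topology Finset

lemma Real.rpow_sum_le_sum_rpow {ι : Type*} (s : Finset ι) {a : ι → ℝ} (ha : ∀ i ∈ s, 0 ≤ a i)
    {p : ℝ} (hp : 0 < p) (hp1 : p ≤ 1) : (∑ i ∈ s, a i) ^ p ≤ ∑ i ∈ s, a i ^ p :=
  le_sum_of_subadditive_on_pred (· ^ p) (0 ≤ ·) (by simp [Real.zero_rpow hp.ne'])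
    (fun _ _ hx hy => Real.rpow_add_le_add_rpow hx hy hp.le hp1) (fun _ _ => add_nonneg) a ha

lemma Real.sum_rpow_sum_fiberwise_le {ι κ : Type*} [Fintype κ] [DecidableEq κ] (s : Finset ι)
    (g : ι → κ) {a : ι → ℝ} (ha : ∀ i, 0 ≤ a i) {p : ℝ} (hp : 0 < p) (hp1 : p ≤ 1) :
    ∑ k, (∑ i ∈ s with g i = k, a i) ^ p ≤ ∑ i ∈ s, a i ^ p :=
  (sum_le_sum fun _ _ => Real.rpow_sum_le_sum_rpow _ (fun i _ => ha i) hp hp1).trans_eq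
    (sum_fiberwise s g _)

lemma sum_range_rpow_le_of_le_geometric {a : ℕ → ℝ} (ha0 : ∀ j, 0 ≤ a j) {δ M : ℝ}
    (hδ0 : 0 ≤ δ) (hδ1 : δ < 1) (ha : ∀ j, a j ≤ δ ^ j * M) {p : ℝ} (hp : 0 < p) (k : ℕ) :
    ∑ j ∈ range k, a j ^ p ≤ M ^ p / (1 - δ ^ p) := by
  have hM : 0 ≤ M := by simpa using (ha0 0).trans (ha 0)
  calc ∑ j ∈ range k, a j ^ p ≤ ∑ j ∈ range k, (δ ^ p) ^ j * M ^ p :=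
        sum_le_sum fun j _ => (Real.rpow_le_rpow (ha0 j) (ha j) hp.le).trans_eq <| by
          rw [Real.mul_rpow (pow_nonneg hδ0 j) hM, Real.rpow_pow_comm hδ0]
    _ = (∑ j ∈ Ico 0 k, (δ ^ p) ^ j) * M ^ p := by rw [sum_mul, range_eq_Ico]
    _ ≤ (δ ^ p) ^ 0 / (1 - δ ^ p) * M ^ p :=
        mul_le_mul_of_nonneg_right (geom_sum_Ico_le_of_lt_one (by positivity)
          (Real.rpow_lt_one hδ0 hδ1 hp)) (by positivity)
    _ = M ^ p / (1 - δ ^ p) := by ring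

lemma tendsto_sum_range_fiberwise {κ : Type*} [DecidableEq κ] {a : ℕ → ℝ} (ha0 : ∀ j, 0 ≤ a j)
    (ha : Summable a) (g : ℕ → κ) :
    Tendsto (fun n k => ∑ j ∈ range n with g j = k, a j) atTop
      (𝓝 fun k => ∑' j, if g j = k then a j else 0) := by
  refine tendsto_pi_nhds.2 fun k => ?_
  simp only [sum_filter]
  exact (ha.of_nonneg_of_le (fun j => by split_ifs <;> simp [ha0])
    (fun j => by split_ifs <;> simp [ha0])).hasSum.tendsto_sum_nat

lemma apply_iterate_le_pow_mul {E : Type*} {N : E → ℝ} {T : E → E} {δ : ℝ} (hδ : 0 ≤ δ)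
    (hT : ∀ x, N (T x) ≤ δ * N x) (x : E) (k : ℕ) : N (T^[k] x) ≤ δ ^ k * N x := by
  induction k with
  | zero => simp
  | succ k ih =>
    rw [Function.iterate_succ_apply', pow_succ', mul_assoc]
    exact (hT _).trans (mul_le_mul_of_nonneg_left ih hδ)

structure IsPNorm {E : Type*} [AddCommGroup E] [Module ℝ E] (p : ℝ) (N : E → ℝ) : Prop where
  nonneg : ∀ x, 0 ≤ N x
  eq_zero_iff : ∀ x, N x = 0 ↔ x = 0
  smul : ∀ (c : ℝ) x, N (c • x) = |c| * N x
  rpow_add_le : ∀ x y, N (x + y) ^ p ≤ N x ^ p + N y ^ p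

namespace IsPNorm

variable {E ι : Type*} [AddCommGroup E] [Module ℝ E] {p : ℝ} {N : E → ℝ}

lemma map_zero (hN : IsPNorm p N) : N 0 = 0 := (hN.eq_zero_iff 0).2 rfl

lemma rpow_sum_le (hN : IsPNorm p N) (hp : 0 < p) (s : Finset ι) (v : ι → E) :
    N (∑ i ∈ s, v i) ^ p ≤ ∑ i ∈ s, N (v i) ^ p :=
  le_sum_of_subadditive (N · ^ p) (by simp [hN.map_zero, Real.zero_rpow hp.ne'])
    hN.rpow_add_le s v

lemma rpow_sum_smul_le (hN : IsPNorm p N) (hp : 0 < p) (s : Finset ι) (a : ι → ℝ)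
    (v : ι → E) : N (∑ i ∈ s, a i • v i) ^ p ≤ ∑ i ∈ s, |a i| ^ p * N (v i) ^ p :=
  (hN.rpow_sum_le hp s _).trans_eq <| sum_congr rfl fun i _ => by
    rw [hN.smul, Real.mul_rpow (abs_nonneg _) (hN.nonneg _)]

lemma eq_sum_smul_of_tendsto (hN : IsPNorm p N) (hp : 0 < p) [Fintype ι] {f : ι → E} {g : E}
    {u : ℕ → ι → ℝ} {c : ι → ℝ} (hu : Tendsto u atTop (𝓝 c))
    (hg : Tendsto (fun k => N (g - ∑ i, u k i • f i)) atTop (𝓝 0)) :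
    g = ∑ i, c i • f i := by
  have hle : ∀ k, N (g - ∑ i, c i • f i) ^ p ≤
      N (g - ∑ i, u k i • f i) ^ p + ∑ i, |u k i - c i| ^ p * N (f i) ^ p := fun k => by
    have hsplit : g - ∑ i, c i • f i = (g - ∑ i, u k i • f i) + ∑ i, (u k i - c i) • f i := by
      simp only [sub_smul, sum_sub_distrib]
      abel
    rw [hsplit]
    exact (hN.rpow_add_le _ _).trans (add_le_add le_rfl (hN.rpow_sum_smul_le hp _ _ _))
  have hlim : Tendsto (fun k => N (g - ∑ i, u k i • f i) ^ p +
      ∑ i, |u k i - c i| ^ p * N (f i) ^ p) atTop (𝓝 0) := by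
    have hcoord : ∀ i, Tendsto (fun k => |u k i - c i| ^ p * N (f i) ^ p) atTop (𝓝 0) :=
      fun i => by
        simpa [Real.zero_rpow hp.ne'] using
          (((tendsto_pi_nhds.1 hu i).sub_const (c i)).abs.rpow_const
            (Or.inr hp.le)).mul_const (N (f i) ^ p)
    simpa [Real.zero_rpow hp.ne'] using
      (hg.rpow_const (Or.inr hp.le)).add (tendsto_finsetSum _ fun i _ => hcoord i)
  have hzero : N (g - ∑ i, c i • f i) ^ p = 0 :=
    le_antisymm (ge_of_tendsto' hlim hle) (Real.rpow_nonneg (hN.nonneg _) _)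
  rw [Real.rpow_eq_zero (hN.nonneg _) hp.ne', hN.eq_zero_iff, sub_eq_zero] at hzero
  exact hzero

lemma exists_sub_smul_le (hN : IsPNorm p N) [Nonempty ι] {f : ι → E} {δ : ℝ}
    (hnet : ∀ g, N g = 1 → ∃ i, N (g - f i) < δ) (x : E) :
    ∃ i, N (x - N x • f i) ≤ δ * N x := by
  rcases eq_or_ne x 0 with rfl | hx
  · exact ⟨Classical.arbitrary ι, by simp [hN.map_zero]⟩
  have hpos : 0 < N x := (hN.nonneg x).lt_of_ne' (mt (hN.eq_zero_iff x).1 hx)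
  obtain ⟨i, hi⟩ := hnet ((N x)⁻¹ • x) <| by
    rw [hN.smul, abs_inv, abs_of_pos hpos, inv_mul_cancel₀ hpos.ne']
  have hrescale : x - N x • f i = N x • ((N x)⁻¹ • x - f i) := by
    rw [smul_sub, smul_inv_smul₀ hpos.ne']
  refine ⟨i, ?_⟩
  rw [hrescale, hN.smul, abs_of_pos hpos, mul_comm]
  exact mul_le_mul_of_nonneg_right hi.le hpos.le

theorem exists_sum_smul_eq_of_net (hN : IsPNorm p N) (hp0 : 0 < p) (hp1 : p ≤ 1) {δ : ℝ}
    (hδ0 : 0 ≤ δ) (hδ1 : δ < 1) [Fintype ι] [Nonempty ι] {f : ι → E}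
    (hnet : ∀ g, N g = 1 → ∃ i, N (g - f i) < δ) (g : E) :
    ∃ c : ι → ℝ, g = ∑ i, c i • f i ∧ ∑ i, |c i| ^ p ≤ N g ^ p / (1 - δ ^ p) := by
  classical
  choose σ hσ using hN.exists_sub_smul_le hnet
  set T : E → E := fun x => x - N x • f (σ x)
  set a : ℕ → ℝ := fun j => N (T^[j] g)
  set idx : ℕ → ι := fun j => σ (T^[j] g)
  set u : ℕ → ι → ℝ := fun k i => ∑ j ∈ range k with idx j = i, a j
  have ha0 : ∀ j, 0 ≤ a j := fun j => hN.nonneg _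
  have ha : ∀ j, a j ≤ δ ^ j * N g := apply_iterate_le_pow_mul hδ0 hσ g
  have hu_sum : ∀ k, ∑ i, u k i • f i = g - T^[k] g := fun k => by
    change _ = T^[0] g - T^[k] g
    rw [← sum_range_sub' (fun j => T^[j] g) k, ← sum_fiberwise (range k) idx]
    refine sum_congr rfl fun i _ => ?_
    rw [sum_smul]
    refine sum_congr rfl fun j hj => ?_
    rw [Function.iterate_succ_apply', sub_sub_cancel, ← (mem_filter.1 hj).2]
  have hu_bound : ∀ k, ∑ i, |u k i| ^ p ≤ N g ^ p / (1 - δ ^ p) := fun k => by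
    have hu_abs : ∀ i, |u k i| = u k i := fun i => abs_of_nonneg (sum_nonneg fun j _ => ha0 j)
    simp only [hu_abs]
    exact (Real.sum_rpow_sum_fiberwise_le _ idx ha0 hp0 hp1).trans
      (sum_range_rpow_le_of_le_geometric ha0 hδ0 hδ1 ha hp0 k)
  have hu_lim := tendsto_sum_range_fiberwise ha0
    (.of_nonneg_of_le ha0 ha ((summable_geometric_of_lt_one hδ0 hδ1).mul_right _)) idx
  have hresidual : Tendsto (fun k => N (g - ∑ i, u k i • f i)) atTop (𝓝 0) := by
    simp only [hu_sum, sub_sub_cancel]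
    refine squeeze_zero ha0 ha ?_
    simpa using (tendsto_pow_atTop_nhds_zero_of_lt_one hδ0 hδ1).mul_const (N g)
  have hcont : Continuous fun w : ι → ℝ => ∑ i, |w i| ^ p :=
    continuous_finsetSum _ fun i _ => (continuous_apply i).abs.rpow_const fun _ => Or.inr hp0.le
  exact ⟨_, hN.eq_sum_smul_of_tendsto hp0 hu_lim hresidual,
    le_of_tendsto' ((hcont.tendsto _).comp hu_lim) hu_bound⟩

end IsPNorm

theorem greedy_decomposition_general (p δ : ℝ) (hp0 : 0 < p) (hp1 : p ≤ 1)
    (hδ0 : 0 < δ) (hδ1 : δ < 1)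
    (F : Type*) [AddCommGroup F] [Module ℝ F]
    (N : F → ℝ)
    (hN0 : ∀ x, 0 ≤ N x) (hNdef : ∀ x, N x = 0 ↔ x = 0)
    (hNhom : ∀ (c : ℝ) (x : F), N (c • x) = |c| * N x)
    (hNp : ∀ x y, N (x + y) ^ p ≤ N x ^ p + N y ^ p)
    (n : ℕ) (f : Fin n → F)
    (hnet : ∀ g : F, N g = 1 → ∃ i, N (g - f i) < δ) :
    ∀ g : F, N g = 1 →
      ∃ c : Fin n → ℝ, g = ∑ i, c i • f i ∧
        (∑ i, |c i| ^ p) ^ (1 / p) ≤ (1 - δ ^ p) ^ (-(1 / p)) := by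
  intro g hg
  obtain ⟨i₀, -⟩ := hnet g hg
  have : Nonempty (Fin n) := ⟨i₀⟩
  obtain ⟨c, hgc, hc⟩ := IsPNorm.exists_sum_smul_eq_of_net ⟨hN0, hNdef, hNhom, hNp⟩
    hp0 hp1 hδ0.le hδ1 hnet g
  have hgap : 0 < 1 - δ ^ p := sub_pos.2 (Real.rpow_lt_one hδ0.le hδ1 hp0)
  rw [hg, Real.one_rpow, one_div] at hc
  refine ⟨c, hgc, ?_⟩
  calc (∑ i, |c i| ^ p) ^ (1 / p) ≤ ((1 - δ ^ p)⁻¹) ^ (1 / p) :=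
        Real.rpow_le_rpow (sum_nonneg fun i _ => by positivity) hc (by positivity)
    _ = (1 - δ ^ p) ^ (-(1 / p)) := by rw [Real.rpow_neg hgap.le, Real.inv_rpow hgap.le]

/-- Greedy decomposition: if `f₁,…,f_n` is a `δ`-net of the unit sphere of a
finite-dimensional `p`-normed space `F`, then every unit vector `f` can be written as
`f = ∑ c_i f_i` with `(∑ |c_i|^p)^(1/p) ≤ (1 − δ^p)^(−1/p)`. -/
theorem greedy_decomposition (p δ : ℝ) (hp0 : 0 < p) (hp1 : p ≤ 1)
    (hδ0 : 0 < δ) (hδ1 : δ < 1)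
    (F : Type*) [AddCommGroup F] [Module ℝ F] [FiniteDimensional ℝ F]
    (N : F → ℝ)
    (hN0 : ∀ x, 0 ≤ N x) (hNdef : ∀ x, N x = 0 ↔ x = 0)
    (hNhom : ∀ (c : ℝ) (x : F), N (c • x) = |c| * N x)
    (hNp : ∀ x y, N (x + y) ^ p ≤ N x ^ p + N y ^ p)
    (n : ℕ) (f : Fin n → F)
    (hfS : ∀ i, N (f i) = 1)
    (hnet : ∀ g : F, N g = 1 → ∃ i, N (g - f i) < δ) :
    ∀ g : F, N g = 1 →
      ∃ c : Fin n → ℝ, g = ∑ i, c i • f i ∧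
        (∑ i, |c i| ^ p) ^ (1 / p) ≤ (1 - δ ^ p) ^ (-(1 / p)) :=
  greedy_decomposition_general p δ hp0 hp1 hδ0 hδ1 F N hN0 hNdef hNhom hNp n f hnet
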